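/- arXiv:1501.03436 — 5 statements merged into one kernel-verified Lean document; each statement's English description precedes it below -/
import Mathlib

section
/- Let G and H be connected finite simple graphs, with H having k vertices, and let f : V(G) → V(H) be a nonconstant function. Then Σ_{{u,v}} d_H(f(u),f(v))² · deg_G(u) · deg_G(v) ≤ (vol(G)² · D_H² / 2) · (1 − 1/k), where the sum is over unordered pairs of distinct vertices u, v of G. -/
open scoped Classical
open Finset

/-- Degree of a vertex in a finite simple graph. -/
noncomputable def gdeg {V : Type*} [Fintype V] (G : SimpleGraph V) (v : V) : ℕ :=
  (G.neighborSet v).ncard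

/-- The volume of a finite simple graph: the sum of the degrees of all vertices. -/
noncomputable def gvol {V : Type*} [Fintype V] (G : SimpleGraph V) : ℕ :=
  ∑ v, gdeg G v

/-- The Rayleigh-type quotient `R_f(G, X)` for an embedding `f : V(G) → X` where `X`
carries a distance function `d`.  The sum over ordered pairs of adjacent vertices divided
by `2` is the sum over edges of `G`; the sum over ordered pairs of distinct vertices divided
by `2` is the sum over unordered pairs of distinct vertices of `G`. -/
noncomputable def Rf {V X : Type*} [Fintype V] (G : SimpleGraph V) (d : X → X → ℝ)
    (f : V → X) : ℝ :=
  ((gvol G : ℝ) * ((∑ u, ∑ v, if G.Adj u v then d (f u) (f v) ^ 2 else 0) / 2)) /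
    ((∑ u, ∑ v, if u ≠ v then d (f u) (f v) ^ 2 * (gdeg G u : ℝ) * (gdeg G v : ℝ) else 0) / 2)

/-- `lam G d` is `λ(G, X)`: the infimum of `R_f(G, X)` over nonconstant `f : V(G) → X`. -/
noncomputable def lam {V X : Type*} [Fintype V] (G : SimpleGraph V) (d : X → X → ℝ) : ℝ :=
  sInf {r | ∃ f : V → X, (∃ u v, f u ≠ f v) ∧ r = Rf G d f}

/-- The diameter of a finite simple graph: the maximum shortest-path distance over pairs. -/
noncomputable def gDiam {V : Type*} [Fintype V] (H : SimpleGraph V) : ℕ :=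
  Finset.univ.sup fun p : V × V => H.dist p.1 p.2

/-- The maximum degree of a finite simple graph. -/
noncomputable def gMaxDeg {V : Type*} [Fintype V] (G : SimpleGraph V) : ℕ :=
  Finset.univ.sup (gdeg G)

/-- The minimum degree of a finite simple graph. -/
noncomputable def gMinDeg {V : Type*} [Fintype V] (G : SimpleGraph V) : ℕ :=
  sInf (Set.range (gdeg G))


/- Bounding every distance by the diameter reduces the claim to the weight `∑ deg u · deg v`
carried by the ordered pairs that `f` separates. That weight is `vol(G)² - ∑_w S_w²`, where
`S_w` is the total degree of the fibre `f⁻¹(w)`, and Cauchy–Schwarz over the `k` fibres gives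
`∑_w S_w² ≥ vol(G)² / k`. -/

lemma dist_le_gDiam {W : Type*} [Fintype W] (H : SimpleGraph W) (a b : W) :
    H.dist a b ≤ gDiam H :=
  Finset.le_sup (f := fun p : W × W => H.dist p.1 p.2) (mem_univ (a, b))

lemma sum_gdeg_eq_gvol {V : Type*} [Fintype V] (G : SimpleGraph V) :
    ∑ v, (gdeg G v : ℝ) = gvol G := by
  simp only [gvol, Nat.cast_sum]

section Fibres

variable {V W : Type*} [Fintype V] [Fintype W]

lemma sum_sq_sum_fiber_eq (f : V → W) (c : V → ℝ) :
    ∑ w, (∑ u with f u = w, c u) ^ 2 =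
      ∑ u, ∑ v, if f u = f v then c u * c v else 0 := by
  calc ∑ w, (∑ u with f u = w, c u) ^ 2
      = ∑ w, ∑ u with f u = w, c u * ∑ v with f v = f u, c v := by
        refine sum_congr rfl fun w _ => ?_
        rw [sq, sum_mul]
        refine sum_congr rfl fun u hu => ?_
        rw [(mem_filter.1 hu).2, mul_comm]
    _ = ∑ u, c u * ∑ v with f v = f u, c v := sum_fiberwise _ f _
    _ = ∑ u, ∑ v, if f u = f v then c u * c v else 0 := by
        refine sum_congr rfl fun u _ => ?_
        rw [sum_filter, mul_sum]
        refine sum_congr rfl fun v _ => ?_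
        by_cases h : f u = f v <;> simp [h, eq_comm]

lemma sum_sum_ite_apply_ne_mul_eq (f : V → W) (c : V → ℝ) :
    ∑ u, ∑ v, (if f u ≠ f v then c u * c v else 0) =
      (∑ u, c u) ^ 2 - ∑ w, (∑ u with f u = w, c u) ^ 2 := by
  rw [sum_sq_sum_fiber_eq, sq, sum_mul_sum, ← sum_sub_distrib]
  refine sum_congr rfl fun u _ => ?_
  rw [← sum_sub_distrib]
  refine sum_congr rfl fun v _ => ?_
  by_cases h : f u = f v <;> simp [h]

lemma sq_sum_div_card_le_sum_sq_sum_fiber (f : V → W) (c : V → ℝ) :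
    (∑ u, c u) ^ 2 / Fintype.card W ≤ ∑ w, (∑ u with f u = w, c u) ^ 2 := by
  rcases (Fintype.card W).eq_zero_or_pos with hW | hW
  · simp only [hW, Nat.cast_zero, div_zero]
    positivity
  rw [div_le_iff₀ (by exact_mod_cast hW), mul_comm, ← sum_fiberwise univ f c]
  exact sq_sum_le_card_mul_sum_sq

lemma sum_sum_ite_apply_ne_mul_le (f : V → W) (c : V → ℝ) :
    ∑ u, ∑ v, (if f u ≠ f v then c u * c v else 0) ≤
      (∑ u, c u) ^ 2 * (1 - 1 / Fintype.card W) := by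
  rw [sum_sum_ite_apply_ne_mul_eq]
  have := sq_sum_div_card_le_sum_sq_sum_fiber f c
  rw [mul_sub, mul_one, mul_one_div]
  linarith

end Fibres

theorem stmt_1_general {V W : Type*} [Fintype V] [Fintype W]
    (G : SimpleGraph V) (H : SimpleGraph W)
    (f : V → W) :
    (∑ u, ∑ v, if u ≠ v then
        (H.dist (f u) (f v) : ℝ) ^ 2 * (gdeg G u : ℝ) * (gdeg G v : ℝ) else 0) / 2
      ≤ (gvol G : ℝ) ^ 2 * (gDiam H : ℝ) ^ 2 / 2 * (1 - 1 / (Fintype.card W : ℝ)) := by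
  set D : ℝ := (gDiam H : ℝ)
  have hterm : ∀ u v, (if u ≠ v then
      (H.dist (f u) (f v) : ℝ) ^ 2 * (gdeg G u : ℝ) * (gdeg G v : ℝ) else 0) ≤
      D ^ 2 * if f u ≠ f v then (gdeg G u : ℝ) * gdeg G v else 0 := by
    intro u v
    by_cases hf : f u = f v
    · by_cases huv : u = v <;> simp [hf, huv]
    have huv : u ≠ v := fun h => hf (congrArg f h)
    have hdist : (H.dist (f u) (f v) : ℝ) ≤ D := Nat.cast_le.mpr (dist_le_gDiam H _ _)
    rw [if_pos huv, if_pos hf, ← mul_assoc]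
    gcongr
  have hsum := sum_sum_ite_apply_ne_mul_le f (fun u => (gdeg G u : ℝ))
  rw [sum_gdeg_eq_gvol] at hsum
  calc _ ≤ (D ^ 2 * ∑ u, ∑ v, if f u ≠ f v then (gdeg G u : ℝ) * gdeg G v else 0) / 2 := by
        simp only [mul_sum]
        gcongr with u _ v _
        exact hterm u v
    _ ≤ D ^ 2 * ((gvol G : ℝ) ^ 2 * (1 - 1 / Fintype.card W)) / 2 := by gcongr
    _ = _ := by ring

/-- For connected finite simple graphs `G`, `H` with `|V(H)| = k` and a
nonconstant `f : V(G) → V(H)`, the sum over unordered pairs of distinct vertices of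
`d_H(f u, f v)^2 · deg u · deg v` is at most `(vol(G)² · D_H² / 2) · (1 - 1/k)`. -/
theorem stmt_1 {V W : Type*} [Fintype V] [Fintype W]
    (G : SimpleGraph V) (H : SimpleGraph W)
    (hG : G.Connected) (hH : H.Connected)
    (f : V → W) (hf : ∃ u v, f u ≠ f v) :
    (∑ u, ∑ v, if u ≠ v then
        (H.dist (f u) (f v) : ℝ) ^ 2 * (gdeg G u : ℝ) * (gdeg G v : ℝ) else 0) / 2
      ≤ (gvol G : ℝ) ^ 2 * (gDiam H : ℝ) ^ 2 / 2 * (1 - 1 / (Fintype.card W : ℝ)) :=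
  stmt_1_general G H f
end

section
/- Let G be a finite simple graph with at least two vertices in which every vertex has at least one neighbor, and let X be a metric space with at least two points. Then λ(G, X) = 0 if and only if G is disconnected. -/
open scoped Classical
open Finset

/-! If `G` is disconnected, sending one connected component to a point `a` and everything else
to `b ≠ a` gives a nonconstant map with zero edge sum, so `λ(G, X) = 0`. If `G` is connected,
any `u, v` are joined by a path of length at most `diam G`, so the triangle inequality and
Cauchy–Schwarz give `d(f u, f v)² ≤ diam G · Σ_E d²`. Weighting by `deg u · deg v` and summing
bounds the denominator of `R_f` by `diam G · vol(G)² · Σ_E d²`, hence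
`R_f ≥ 1 / (diam G · vol G) > 0` for every nonconstant `f`. -/

section Graph

variable {V : Type*} [Fintype V] {G : SimpleGraph V}

lemma dist_le_gDiam_s2 (u v : V) : G.dist u v ≤ gDiam G :=
  le_sup (f := fun q : V × V => G.dist q.1 q.2) (mem_univ (u, v))

lemma gdeg_pos_of_reachable {u v : V} (huv : u ≠ v) (h : G.Reachable u v) : 0 < gdeg G u :=
  (Set.ncard_pos (Set.toFinite _)).mpr (h.nonempty_neighborSet_left huv)

lemma SimpleGraph.Connected.gvol_pos (hc : G.Connected) {u v : V} (huv : u ≠ v) :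
    0 < gvol G :=
  sum_pos' (fun _ _ => Nat.zero_le _) ⟨u, mem_univ _, gdeg_pos_of_reachable huv (hc u v)⟩

lemma SimpleGraph.Connected.gDiam_pos (hc : G.Connected) {u v : V} (huv : u ≠ v) :
    0 < gDiam G :=
  (hc.pos_dist_of_ne huv).trans_le (dist_le_gDiam_s2 u v)

end Graph

noncomputable def edgeEnergy {V X : Type*} [Fintype V] (G : SimpleGraph V) (d : X → X → ℝ)
    (f : V → X) : ℝ :=
  ∑ u, ∑ v, if G.Adj u v then d (f u) (f v) ^ 2 else 0

noncomputable def degPairEnergy {V X : Type*} [Fintype V] (G : SimpleGraph V)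
    (d : X → X → ℝ) (f : V → X) : ℝ :=
  ∑ u, ∑ v, if u ≠ v then d (f u) (f v) ^ 2 * (gdeg G u : ℝ) * (gdeg G v : ℝ) else 0

section Energy

variable {V X : Type*} [Fintype V] {G : SimpleGraph V} {d : X → X → ℝ} {f : V → X}

lemma Rf_eq_div : Rf G d f = gvol G * edgeEnergy G d f / degPairEnergy G d f := by
  unfold Rf edgeEnergy degPairEnergy
  ring

lemma edgeEnergy_nonneg : 0 ≤ edgeEnergy G d f :=
  sum_nonneg fun _ _ => sum_nonneg fun _ _ => by split_ifs <;> positivity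

lemma degPairEnergy_nonneg : 0 ≤ degPairEnergy G d f :=
  sum_nonneg fun _ _ => sum_nonneg fun _ _ => by split_ifs <;> positivity

lemma Rf_nonneg : 0 ≤ Rf G d f := by
  rw [Rf_eq_div]
  exact div_nonneg (mul_nonneg (Nat.cast_nonneg _) edgeEnergy_nonneg) degPairEnergy_nonneg

lemma Rf_eq_zero_of_forall_adj (hd : ∀ x, d x x = 0) (hf : ∀ x y, G.Adj x y → f x = f y) :
    Rf G d f = 0 := by
  have : edgeEnergy G d f = 0 :=
    sum_eq_zero fun x _ => sum_eq_zero fun y _ => by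
      split_ifs with h
      · rw [hf x y h, hd, zero_pow two_ne_zero]
      · rfl
  rw [Rf_eq_div, this, mul_zero, zero_div]

lemma sum_darts_le_edgeEnergy (s : Finset G.Dart) :
    ∑ e ∈ s, d (f e.fst) (f e.snd) ^ 2 ≤ edgeEnergy G d f := by
  have himage : ∑ e ∈ s, d (f e.fst) (f e.snd) ^ 2 =
      ∑ p ∈ s.image SimpleGraph.Dart.toProd,
        if G.Adj p.1 p.2 then d (f p.1) (f p.2) ^ 2 else 0 := by
    rw [sum_image fun _ _ _ _ h => SimpleGraph.Dart.toProd_injective h]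
    exact sum_congr rfl fun e _ => (if_pos e.adj).symm
  rw [himage, edgeEnergy, ← Fintype.sum_prod_type']
  exact sum_le_sum_of_subset_of_nonneg (subset_univ _) fun _ _ _ => by split_ifs <;> positivity

end Energy

section PseudoMetric

variable {V X : Type*} [Fintype V] [PseudoMetricSpace X] {G : SimpleGraph V} {f : V → X}

omit [Fintype V] in
lemma dist_le_sum_darts {u v : V} (p : G.Walk u v) :
    dist (f u) (f v) ≤ (p.darts.map fun e => dist (f e.fst) (f e.snd)).sum := by
  induction p with
  | nil => simp
  | cons h q ih =>
    simp only [SimpleGraph.Walk.darts_cons, List.map_cons, List.sum_cons]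
    exact (dist_triangle _ _ _).trans (add_le_add_right ih _)

lemma sq_dist_le_length_mul_edgeEnergy {u v : V} {p : G.Walk u v} (hp : p.IsPath) :
    dist (f u) (f v) ^ 2 ≤ p.length * edgeEnergy G dist f := by
  have hnodup := SimpleGraph.Walk.darts_nodup_of_support_nodup hp.support_nodup
  set s := p.darts.toFinset
  have hcard : #s = p.length := by
    rw [List.toFinset_card_of_nodup hnodup, SimpleGraph.Walk.length_darts]
  have hdist : dist (f u) (f v) ≤ ∑ e ∈ s, dist (f e.fst) (f e.snd) := by
    rw [List.sum_toFinset _ hnodup]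
    exact dist_le_sum_darts p
  calc dist (f u) (f v) ^ 2 ≤ (∑ e ∈ s, dist (f e.fst) (f e.snd)) ^ 2 :=
        pow_le_pow_left₀ dist_nonneg hdist 2
    _ ≤ #s * ∑ e ∈ s, dist (f e.fst) (f e.snd) ^ 2 := sq_sum_le_card_mul_sum_sq
    _ ≤ p.length * edgeEnergy G dist f := by
        rw [hcard]
        exact mul_le_mul_of_nonneg_left (sum_darts_le_edgeEnergy s) (Nat.cast_nonneg _)

lemma sq_dist_le_gDiam_mul_edgeEnergy (hc : G.Connected) (u v : V) :
    dist (f u) (f v) ^ 2 ≤ gDiam G * edgeEnergy G dist f := by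
  obtain ⟨p, hp, hlen⟩ := hc.exists_path_of_dist u v
  have hdiam : p.length ≤ gDiam G := hlen ▸ dist_le_gDiam_s2 u v
  calc dist (f u) (f v) ^ 2 ≤ p.length * edgeEnergy G dist f :=
        sq_dist_le_length_mul_edgeEnergy hp
    _ ≤ gDiam G * edgeEnergy G dist f := by gcongr; exact edgeEnergy_nonneg

lemma degPairEnergy_le (hc : G.Connected) :
    degPairEnergy G dist f ≤ gDiam G * edgeEnergy G dist f * gvol G ^ 2 := by
  have hvol : (gvol G : ℝ) ^ 2 = ∑ u, ∑ v, (gdeg G u : ℝ) * gdeg G v := by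
    rw [sq, gvol, Nat.cast_sum, sum_mul_sum]
  rw [hvol, mul_sum]
  refine sum_le_sum fun u _ => ?_
  rw [mul_sum]
  refine sum_le_sum fun v _ => ?_
  split_ifs
  · rw [mul_assoc _ (gdeg G u : ℝ)]
    exact mul_le_mul_of_nonneg_right (sq_dist_le_gDiam_mul_edgeEnergy hc u v) (by positivity)
  · exact mul_nonneg (mul_nonneg (Nat.cast_nonneg _) edgeEnergy_nonneg) (by positivity)

end PseudoMetric

section Metric

variable {V X : Type*} [Fintype V] [MetricSpace X] {G : SimpleGraph V} {f : V → X}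

lemma degPairEnergy_pos {u v : V} (h : G.Reachable u v) (hf : f u ≠ f v) :
    0 < degPairEnergy G dist f := by
  have huv : u ≠ v := fun heq => hf (congrArg f heq)
  have hu : (0 : ℝ) < gdeg G u := Nat.cast_pos.mpr (gdeg_pos_of_reachable huv h)
  have hv : (0 : ℝ) < gdeg G v := Nat.cast_pos.mpr (gdeg_pos_of_reachable huv.symm h.symm)
  have hd := dist_pos.mpr hf
  refine sum_pos' (fun _ _ => sum_nonneg fun _ _ => by split_ifs <;> positivity)
    ⟨u, mem_univ _, sum_pos' (fun _ _ => by split_ifs <;> positivity) ⟨v, mem_univ _, ?_⟩⟩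
  rw [if_pos huv]
  positivity

lemma inv_gDiam_mul_gvol_le_Rf (hc : G.Connected) {u v : V} (hf : f u ≠ f v) :
    ((gDiam G : ℝ) * gvol G)⁻¹ ≤ Rf G dist f := by
  set A := edgeEnergy G dist f
  have hP := degPairEnergy_pos (hc u v) hf
  have hle := degPairEnergy_le (f := f) hc
  have hA : A ≠ 0 := fun h => by simp [A, h] at hle; linarith
  have huv : u ≠ v := fun heq => hf (congrArg f heq)
  have hD : (gDiam G : ℝ) ≠ 0 := Nat.cast_ne_zero.mpr (hc.gDiam_pos huv).ne'
  have hW : (gvol G : ℝ) ≠ 0 := Nat.cast_ne_zero.mpr (hc.gvol_pos huv).ne'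
  rw [Rf_eq_div]
  calc ((gDiam G : ℝ) * gvol G)⁻¹ = gvol G * A / (gDiam G * A * gvol G ^ 2) := by
        field_simp
    _ ≤ gvol G * A / degPairEnergy G dist f :=
        div_le_div_of_nonneg_left (mul_nonneg (Nat.cast_nonneg _) edgeEnergy_nonneg) hP hle

end Metric

section Lambda

variable {V X : Type*} [Fintype V] {G : SimpleGraph V}

lemma lam_eq_zero_of_not_preconnected [Nontrivial X] {d : X → X → ℝ} (hd : ∀ x, d x x = 0)
    (hG : ¬ G.Preconnected) : lam G d = 0 := by
  obtain ⟨u, v, huv⟩ : ∃ u v, ¬ G.Reachable u v := by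
    simpa [SimpleGraph.Preconnected] using hG
  obtain ⟨a, b, hab⟩ := exists_pair_ne X
  let g : V → X := fun w => if G.Reachable u w then a else b
  have hg : Rf G d g = 0 := Rf_eq_zero_of_forall_adj hd fun x y hxy => by
    have : G.Reachable u x ↔ G.Reachable u y :=
      ⟨fun h => h.trans hxy.reachable, fun h => h.trans hxy.symm.reachable⟩
    simp only [g, this]
  refine IsLeast.csInf_eq ⟨⟨g, ⟨u, v, ?_⟩, hg.symm⟩, ?_⟩
  · simp [g, huv, hab]
  · rintro r ⟨f, -, rfl⟩
    exact Rf_nonneg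

lemma lam_pos_of_connected [MetricSpace X] [Nontrivial V] [Nontrivial X] (hc : G.Connected) :
    0 < lam G (dist : X → X → ℝ) := by
  obtain ⟨u, v, huv⟩ := exists_pair_ne V
  obtain ⟨a, b, hab⟩ := exists_pair_ne X
  let g : V → X := fun w => if w = u then a else b
  have hg : g u ≠ g v := by simp [g, huv.symm, hab]
  have hbound : ((gDiam G : ℝ) * gvol G)⁻¹ ≤ lam G (dist : X → X → ℝ) := by
    refine le_csInf ⟨_, g, ⟨u, v, hg⟩, rfl⟩ ?_
    rintro r ⟨f, ⟨x, y, hf⟩, rfl⟩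
    exact inv_gDiam_mul_gvol_le_Rf hc hf
  have hD : (0 : ℝ) < gDiam G := Nat.cast_pos.mpr (hc.gDiam_pos huv)
  have hW : (0 : ℝ) < gvol G := Nat.cast_pos.mpr (hc.gvol_pos huv)
  exact (inv_pos.mpr (mul_pos hD hW)).trans_le hbound

end Lambda

theorem stmt_2_general {V : Type*} [Fintype V] (G : SimpleGraph V)
    (hV : 2 ≤ Fintype.card V)
    (X : Type*) [MetricSpace X] (hX : ∃ a b : X, a ≠ b) :
    lam G (fun x y : X => dist x y) = 0 ↔ ¬ G.Connected := by
  have : Nontrivial V := Fintype.one_lt_card_iff_nontrivial.mp hV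
  have : Nontrivial X := ⟨hX⟩
  refine ⟨fun h hc => (lam_pos_of_connected hc).ne' h, fun h => ?_⟩
  exact lam_eq_zero_of_not_preconnected (dist_self (α := X)) fun hp => h ⟨hp⟩

/-- For a finite simple graph `G` with at least two vertices in which every
vertex has a neighbor, and a metric space `X` with at least two points,
`λ(G, X) = 0` iff `G` is disconnected. -/
theorem stmt_2 {V : Type*} [Fintype V] (G : SimpleGraph V)
    (hV : 2 ≤ Fintype.card V) (hdeg : ∀ v : V, ∃ u, G.Adj v u)
    (X : Type*) [MetricSpace X] (hX : ∃ a b : X, a ≠ b) :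
    lam G (fun x y : X => dist x y) = 0 ↔ ¬ G.Connected :=
  stmt_2_general G hV X hX
end

section
/- There exists an absolute constant C > 0 such that for every finite metric space X with at least two points and every connected finite simple graph G with at least two vertices, (C / (log |X|)²) · λ(G, ℝ) ≤ λ(G, X), where |X| is the number of points of X and λ(G, ℝ) is taken with respect to the usual metric on the real numbers. -/
open scoped Classical
open Finset

/-!
Bourgain's random-subset embedding. For a scale `t`, let `A ⊆ X` contain every point
independently with probability `2^{-(t+1)}` and map `z ↦ d(z, A)`, a 1-Lipschitz function.
For a pair `x, y` let `r_t` be the least radius at which the closed balls around `x` and `y`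
both contain `2^t` points, capped at `d(x, y)/4`. With probability at least a constant, `A`
misses one of the open balls of radius `r_{t+1}` and hits the closed ball of radius `r_t`
around the other point, so `|d(x, A) - d(y, A)| ≥ r_{t+1} - r_t`. Telescoping over the
`m ≈ log₂ |X|` scales and Cauchy–Schwarz give that the average over `(t, A)` of
`(d(x, A) - d(y, A))²` is at least `c d(x, y)² / m²`.

Feeding each coordinate `d(f(·), A)` of a map `f : V → X` into the definition of `λ(G, ℝ)` and
averaging then bounds `λ(G, X)` from below: the edge sum only shrinks under 1-Lipschitz maps,
while the sum over pairs of vertices is linear in the squared distances.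
-/

open Metric

section Rayleigh

variable {V : Type*} [Fintype V] (G : SimpleGraph V)

noncomputable def edgeSum (δ : V → V → ℝ) : ℝ :=
  ∑ u, ∑ v, if G.Adj u v then δ u v else 0

noncomputable def degPairSum (δ : V → V → ℝ) : ℝ :=
  ∑ u, ∑ v, if u ≠ v then δ u v * (gdeg G u : ℝ) * (gdeg G v : ℝ) else 0

variable {G}

lemma edgeSum_nonneg {δ : V → V → ℝ} (hδ : ∀ u v, 0 ≤ δ u v) : 0 ≤ edgeSum G δ :=
  sum_nonneg fun u _ => sum_nonneg fun v _ => by split_ifs <;> simp [hδ]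

lemma edgeSum_mono {δ δ' : V → V → ℝ} (h : ∀ u v, δ u v ≤ δ' u v) :
    edgeSum G δ ≤ edgeSum G δ' :=
  sum_le_sum fun u _ => sum_le_sum fun v _ => by split_ifs <;> simp [h]

lemma degPairSum_nonneg {δ : V → V → ℝ} (hδ : ∀ u v, 0 ≤ δ u v) : 0 ≤ degPairSum G δ :=
  sum_nonneg fun u _ => sum_nonneg fun v _ => by
    split_ifs
    · exact mul_nonneg (mul_nonneg (hδ u v) (Nat.cast_nonneg _)) (Nat.cast_nonneg _)
    · rfl

lemma degPairSum_mono {δ δ' : V → V → ℝ} (h : ∀ u v, δ u v ≤ δ' u v) :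
    degPairSum G δ ≤ degPairSum G δ' :=
  sum_le_sum fun u _ => sum_le_sum fun v _ => by
    split_ifs
    · gcongr
      exact h u v
    · rfl

lemma degPairSum_sum {ι : Type*} (s : Finset ι) (w : ι → ℝ) (δ : ι → V → V → ℝ) :
    degPairSum G (fun u v => ∑ i ∈ s, w i * δ i u v) = ∑ i ∈ s, w i * degPairSum G (δ i) := by
  have hpull : ∀ u v, (if u ≠ v then (∑ i ∈ s, w i * δ i u v) * gdeg G u * gdeg G v else 0) =
      ∑ i ∈ s, w i * if u ≠ v then δ i u v * gdeg G u * gdeg G v else 0 := by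
    intro u v
    split_ifs <;> simp [sum_mul, mul_assoc]
  simp only [degPairSum, hpull, mul_sum]
  exact sum_comm_cycle

lemma gdeg_pos_of_connected (hG : G.Connected) (hV : 2 ≤ Fintype.card V) (v : V) :
    0 < gdeg G v := by
  obtain ⟨u, hu⟩ := Fintype.exists_ne_of_one_lt_card hV v
  exact (Set.ncard_pos (Set.toFinite _)).mpr
    ((hG.preconnected v u).nonempty_neighborSet_left hu.symm)

lemma degPairSum_const_mul (c : ℝ) (δ : V → V → ℝ) :
    degPairSum G (fun u v => c * δ u v) = c * degPairSum G δ := by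
  simpa using degPairSum_sum (G := G) {()} (fun _ => c) (fun _ => δ)

lemma degPairSum_pos (hG : G.Connected) (hV : 2 ≤ Fintype.card V) {δ : V → V → ℝ}
    (hδ : ∀ u v, 0 ≤ δ u v) {u v : V} (huv : u ≠ v) (h : 0 < δ u v) : 0 < degPairSum G δ := by
  have hterm : ∀ a b : V, 0 ≤ if a ≠ b then δ a b * (gdeg G a : ℝ) * (gdeg G b : ℝ) else 0 :=
    fun a b => by
      split_ifs
      · exact mul_nonneg (mul_nonneg (hδ a b) (Nat.cast_nonneg _)) (Nat.cast_nonneg _)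
      · rfl
  refine sum_pos' (fun a _ => sum_nonneg fun b _ => hterm a b) ⟨u, mem_univ u, ?_⟩
  refine sum_pos' (fun b _ => hterm u b) ⟨v, mem_univ v, ?_⟩
  rw [if_pos huv]
  have := gdeg_pos_of_connected hG hV u
  have := gdeg_pos_of_connected hG hV v
  positivity

lemma Rf_eq_div_s6 {X : Type*} (d : X → X → ℝ) (f : V → X) :
    Rf G d f = gvol G * edgeSum G (fun u v => d (f u) (f v) ^ 2) /
      degPairSum G (fun u v => d (f u) (f v) ^ 2) := by
  rw [Rf, mul_div_assoc', div_div_div_cancel_right₀ two_ne_zero]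
  rfl

variable {Y : Type*} [MetricSpace Y]

lemma Rf_dist_nonneg (f : V → Y) : 0 ≤ Rf G (fun x y : Y => dist x y) f := by
  rw [Rf_eq_div_s6]
  have := edgeSum_nonneg (G := G) fun u v => sq_nonneg (dist (f u) (f v))
  have := degPairSum_nonneg (G := G) fun u v => sq_nonneg (dist (f u) (f v))
  positivity

lemma lam_dist_nonneg : 0 ≤ lam G (fun x y : Y => dist x y) :=
  Real.sInf_nonneg fun _ ⟨f, _, hr⟩ => hr ▸ Rf_dist_nonneg f

lemma lam_mul_degPairSum_le (f : V → Y) :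
    lam G (fun x y : Y => dist x y) * degPairSum G (fun u v => dist (f u) (f v) ^ 2) ≤
      gvol G * edgeSum G (fun u v => dist (f u) (f v) ^ 2) := by
  have hE := edgeSum_nonneg (G := G) fun u v => sq_nonneg (dist (f u) (f v))
  rcases (degPairSum_nonneg (G := G) fun u v => sq_nonneg (dist (f u) (f v))).eq_or_lt
    with hD | hD
  · rw [← hD, mul_zero]
    positivity
  have hnc : ∃ u v, f u ≠ f v := by
    by_contra! hc
    have hzero : ∀ a b, dist (f a) (f b) = 0 := fun a b => by rw [hc a b, dist_self]
    simp [degPairSum, hzero] at hD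
  have hle : lam G (fun x y : Y => dist x y) ≤ Rf G (fun x y : Y => dist x y) f :=
    csInf_le ⟨0, fun _ ⟨g, _, hr⟩ => hr ▸ Rf_dist_nonneg g⟩ ⟨f, hnc, rfl⟩
  rwa [Rf_eq_div_s6, le_div_iff₀ hD] at hle

theorem mul_lam_le_lam_of_average {X ι : Type*} [MetricSpace X] [Nontrivial X]
    (hG : G.Connected) (hV : 2 ≤ Fintype.card V) {s : Finset ι} {w : ι → ℝ}
    {φ : ι → X → Y} {c : ℝ} (hw : ∀ i ∈ s, 0 ≤ w i) (hw1 : ∑ i ∈ s, w i ≤ 1)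
    (hφ : ∀ i ∈ s, LipschitzWith 1 (φ i))
    (hc : ∀ x y, c * dist x y ^ 2 ≤ ∑ i ∈ s, w i * dist (φ i x) (φ i y) ^ 2) :
    c * lam G (fun a b : Y => dist a b) ≤ lam G (fun x y : X => dist x y) := by
  have : Nontrivial V := Fintype.one_lt_card_iff_nontrivial.mp hV
  obtain ⟨v₀, v₁, hv⟩ := exists_pair_ne V
  obtain ⟨x₀, x₁, hx⟩ := exists_pair_ne X
  refine le_csInf ⟨_, fun v => if v = v₀ then x₀ else x₁, ⟨v₀, v₁, by simpa [hv.symm]⟩, rfl⟩ ?_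
  rintro _ ⟨f, ⟨u, v, huv⟩, rfl⟩
  set lamY := lam G (fun a b : Y => dist a b)
  set EX := edgeSum G (fun u v => dist (f u) (f v) ^ 2)
  have hEX : 0 ≤ (gvol G : ℝ) * EX :=
    mul_nonneg (Nat.cast_nonneg _) (edgeSum_nonneg fun u v => sq_nonneg _)
  have hDX := degPairSum_pos hG hV (fun u v => sq_nonneg (dist (f u) (f v)))
    (fun h => huv (congrArg f h)) (pow_pos (dist_pos.mpr huv) 2)
  have hlip : ∀ i ∈ s, ∀ u v, dist (φ i (f u)) (φ i (f v)) ^ 2 ≤ dist (f u) (f v) ^ 2 :=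
    fun i hi u v => pow_le_pow_left₀ dist_nonneg (by simpa using (hφ i hi).dist_le_mul _ _) 2
  rw [Rf_eq_div_s6, le_div_iff₀ hDX]
  calc c * lamY * degPairSum G (fun u v => dist (f u) (f v) ^ 2)
      = lamY * degPairSum G (fun u v => c * dist (f u) (f v) ^ 2) := by
        rw [degPairSum_const_mul]; ring
    _ ≤ lamY * ∑ i ∈ s, w i * degPairSum G (fun u v => dist (φ i (f u)) (φ i (f v)) ^ 2) := by
        rw [← degPairSum_sum]
        exact mul_le_mul_of_nonneg_left (degPairSum_mono fun u v => hc _ _) lam_dist_nonneg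
    _ = ∑ i ∈ s, w i * (lamY * degPairSum G (fun u v => dist (φ i (f u)) (φ i (f v)) ^ 2)) := by
        rw [mul_sum]; exact sum_congr rfl fun i _ => by ring
    _ ≤ ∑ i ∈ s, w i * (gvol G * EX) := by
        refine sum_le_sum fun i hi => mul_le_mul_of_nonneg_left ?_ (hw i hi)
        refine (lam_mul_degPairSum_le _).trans ?_
        exact mul_le_mul_of_nonneg_left (edgeSum_mono (hlip i hi)) (Nat.cast_nonneg _)
    _ = (∑ i ∈ s, w i) * (gvol G * EX) := (sum_mul _ _ _).symm
    _ ≤ gvol G * EX := mul_le_of_le_one_left hEX hw1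

end Rayleigh

section Bernoulli

variable {α : Type*} [Fintype α]

/-- The probability of the outcome `A` when every point of `α` is put into `A` independently
with probability `p`. -/
noncomputable def bernoulliWeight (p : ℝ) (A : Finset α) : ℝ :=
  p ^ #A * (1 - p) ^ (Fintype.card α - #A)

lemma bernoulliWeight_nonneg {p : ℝ} (hp0 : 0 ≤ p) (hp1 : p ≤ 1) (A : Finset α) :
    0 ≤ bernoulliWeight p A :=
  mul_nonneg (pow_nonneg hp0 _) (pow_nonneg (sub_nonneg.mpr hp1) _)

lemma sum_bernoulliWeight (p : ℝ) : ∑ A ∈ (univ : Finset α).powerset, bernoulliWeight p A = 1 := by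
  rw [← one_pow (Fintype.card α), ← add_sub_cancel p 1, ← card_univ, ← sum_pow_mul_eq_add_pow]
  rfl

lemma sum_bernoulliWeight_disjoint (p : ℝ) (R : Finset α) :
    ∑ A ∈ univ.powerset with Disjoint A R, bernoulliWeight p A = (1 - p) ^ #R := by
  have hfilter : ({A ∈ univ.powerset | Disjoint A R} : Finset (Finset α)) = Rᶜ.powerset := by
    ext A
    simp [subset_compl_iff_disjoint_right]
  have hweight : ∀ A ∈ Rᶜ.powerset,
      bernoulliWeight p A = (1 - p) ^ #R * (p ^ #A * (1 - p) ^ (#Rᶜ - #A)) := by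
    intro A hA
    have hA := card_le_card (mem_powerset.mp hA)
    have hR := card_le_univ R
    rw [card_compl] at hA ⊢
    rw [bernoulliWeight, mul_left_comm, ← pow_add]
    congr 3
    omega
  rw [hfilter, sum_congr rfl hweight, ← mul_sum, sum_pow_mul_eq_add_pow]
  simp

lemma sum_bernoulliWeight_hit (p : ℝ) {S T : Finset α} (hST : Disjoint S T) :
    ∑ A ∈ univ.powerset with Disjoint A S ∧ ¬Disjoint A T, bernoulliWeight p A =
      (1 - p) ^ #S * (1 - (1 - p) ^ #T) := by
  have hsplit := sum_filter_add_sum_filter_not {A ∈ univ.powerset | Disjoint A S}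
    (fun A => Disjoint A T) (bernoulliWeight p)
  simp only [filter_filter, ← disjoint_union_right] at hsplit
  rw [sum_bernoulliWeight_disjoint, sum_bernoulliWeight_disjoint, card_union_of_disjoint hST,
    pow_add] at hsplit
  linear_combination hsplit

end Bernoulli

section HitProbability

lemma exp_neg_two_le_one_sub_pow {p : ℝ} (hp0 : 0 ≤ p) (hp : p ≤ 1 / 2) {k : ℕ}
    (hk : p * k ≤ 1) : Real.exp (-2) ≤ (1 - p) ^ k := by
  have hstep : Real.exp (-(2 * p)) ≤ 1 - p := by
    rw [Real.exp_neg, inv_le_iff_one_le_mul₀ (Real.exp_pos _)]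
    nlinarith [Real.add_one_le_exp (2 * p)]
  calc Real.exp (-2) ≤ Real.exp (-(2 * p)) ^ k := by
        rw [← Real.exp_nat_mul, Real.exp_le_exp]
        linarith
    _ ≤ (1 - p) ^ k := pow_le_pow_left₀ (Real.exp_nonneg _) hstep k

lemma one_sub_pow_le_exp_neg_half {p : ℝ} (hp : p ≤ 1) {k : ℕ} (hk : 1 / 2 ≤ p * k) :
    (1 - p) ^ k ≤ Real.exp (-(1 / 2)) :=
  calc (1 - p) ^ k ≤ Real.exp (-p) ^ k :=
        pow_le_pow_left₀ (by linarith) (Real.one_sub_le_exp_neg p) k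
    _ ≤ Real.exp (-(1 / 2)) := by
        rw [← Real.exp_nat_mul, Real.exp_le_exp]
        linarith

noncomputable def hitConst : ℝ := Real.exp (-2) * (1 - Real.exp (-(1 / 2)))

lemma hitConst_pos : 0 < hitConst :=
  mul_pos (Real.exp_pos _) (sub_pos.mpr (Real.exp_lt_one_iff.mpr (by norm_num)))

lemma hitConst_le_sum_bernoulliWeight_hit {α : Type*} [Fintype α] {p : ℝ} (hp0 : 0 ≤ p)
    (hp : p ≤ 1 / 2) {S T : Finset α} (hST : Disjoint S T) (hS : p * #S ≤ 1)
    (hT : 1 / 2 ≤ p * #T) :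
    hitConst ≤ ∑ A ∈ univ.powerset with Disjoint A S ∧ ¬Disjoint A T, bernoulliWeight p A := by
  rw [sum_bernoulliWeight_hit p hST, hitConst]
  have hmiss := one_sub_pow_le_exp_neg_half (by linarith) hT
  exact mul_le_mul (exp_neg_two_le_one_sub_pow hp0 hp hS) (by linarith)
    (sub_nonneg.mpr (Real.exp_le_one_iff.mpr (by norm_num))) (pow_nonneg (by linarith) _)

end HitProbability

section ScaleRadius

variable {X : Type*} [MetricSpace X] [Fintype X]

variable (X) in
noncomputable def distValues : Finset ℝ := univ.image fun q : X × X => dist q.1 q.2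

lemma dist_mem_distValues (x y : X) : dist x y ∈ distValues X :=
  mem_image_of_mem _ (mem_univ (x, y))

lemma nonneg_of_mem_distValues {r : ℝ} (hr : r ∈ distValues X) : 0 ≤ r := by
  obtain ⟨q, -, rfl⟩ := mem_image.mp hr
  exact dist_nonneg

/-- Distances take finitely many values, so every open ball is a closed ball of smaller radius. -/
lemma exists_distValue_lt [Nonempty X] {r : ℝ} (hr : 0 < r) :
    ∃ ρ ∈ distValues X, ρ < r ∧ ∀ z u : X, dist z u < r → dist z u ≤ ρ := by
  have hne : {s ∈ distValues X | s < r}.Nonempty :=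
    ⟨0, mem_filter.mpr ⟨dist_self (Classical.arbitrary X) ▸ dist_mem_distValues _ _, hr⟩⟩
  obtain ⟨hmem, hlt⟩ := mem_filter.mp (max'_mem _ hne)
  exact ⟨_, hmem, hlt, fun z u h => le_max' _ _ (mem_filter.mpr ⟨dist_mem_distValues z u, h⟩)⟩

noncomputable def scaleCandidates (x y : X) (t : ℕ) : Finset ℝ :=
  insert (dist x y / 4) {r ∈ distValues X | r ≤ dist x y / 4 ∧
    2 ^ t ≤ #{u | dist x u ≤ r} ∧ 2 ^ t ≤ #{u | dist y u ≤ r}}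

/-- The `t`-th Bourgain scale of the pair `x, y`: the least radius at which the closed balls
around both `x` and `y` contain `2 ^ t` points, capped at `dist x y / 4`. -/
noncomputable def scaleRadius (x y : X) (t : ℕ) : ℝ :=
  (scaleCandidates x y t).min' (insert_nonempty _ _)

variable (x y : X)

lemma scaleRadius_le (t : ℕ) : scaleRadius x y t ≤ dist x y / 4 :=
  min'_le _ _ (mem_insert_self _ _)

lemma scaleRadius_nonneg (t : ℕ) : 0 ≤ scaleRadius x y t := by
  refine le_min' _ _ _ fun r hr => ?_
  rcases mem_insert.mp hr with rfl | hr
  · positivity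
  · exact nonneg_of_mem_distValues (mem_filter.mp hr).1

lemma scaleRadius_mono : Monotone (scaleRadius x y) := by
  refine monotone_nat_of_le_succ fun t => min'_subset _ fun r hr => ?_
  rcases mem_insert.mp hr with rfl | hr
  · exact mem_insert_self _ _
  · obtain ⟨hr, hr4, hx, hy⟩ := mem_filter.mp hr
    have h2 : 2 ^ t ≤ 2 ^ (t + 1) := Nat.pow_le_pow_right two_pos t.le_succ
    exact mem_insert_of_mem (mem_filter.mpr ⟨hr, hr4, h2.trans hx, h2.trans hy⟩)

lemma scaleRadius_zero : scaleRadius x y 0 = 0 := by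
  refine le_antisymm (min'_le _ _ (mem_insert_of_mem (mem_filter.mpr ⟨?_, ?_, ?_, ?_⟩)))
    (scaleRadius_nonneg x y 0)
  · exact dist_self x ▸ dist_mem_distValues x x
  · positivity
  · exact card_pos.mpr ⟨x, by simp⟩
  · exact card_pos.mpr ⟨y, by simp⟩

lemma scaleRadius_of_card_lt {t : ℕ} (ht : Fintype.card X < 2 ^ t) :
    scaleRadius x y t = dist x y / 4 := by
  refine le_antisymm (scaleRadius_le x y t) (le_min' _ _ _ fun r hr => ?_)
  rcases mem_insert.mp hr with rfl | hr
  · rfl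
  · have := (mem_filter.mp hr).2.2.1.trans (card_le_univ _)
    omega

variable {x y}

lemma two_pow_le_card_closedBall_scaleRadius {t : ℕ}
    (h : scaleRadius x y t < scaleRadius x y (t + 1)) :
    2 ^ t ≤ #{u | dist x u ≤ scaleRadius x y t} ∧ 2 ^ t ≤ #{u | dist y u ≤ scaleRadius x y t} := by
  rcases mem_insert.mp (min'_mem (scaleCandidates x y t) (insert_nonempty _ _)) with h4 | hr
  · have := scaleRadius_le x y (t + 1)
    rw [scaleRadius, h4] at h
    linarith
  · exact (mem_filter.mp hr).2.2

lemma card_ball_scaleRadius_succ_lt {t : ℕ} (h : scaleRadius x y t < scaleRadius x y (t + 1)) :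
    #{u | dist x u < scaleRadius x y (t + 1)} < 2 ^ (t + 1) ∨
      #{u | dist y u < scaleRadius x y (t + 1)} < 2 ^ (t + 1) := by
  by_contra! hcard
  have : Nonempty X := ⟨x⟩
  obtain ⟨ρ, hρ, hρr, hball⟩ :=
    exists_distValue_lt (X := X) ((scaleRadius_nonneg x y t).trans_lt h)
  have hsub : ∀ z : X, #{u | dist z u < scaleRadius x y (t + 1)} ≤ #{u | dist z u ≤ ρ} :=
    fun z => card_le_card fun u hu => mem_filter.mpr ⟨mem_univ u, hball z u (mem_filter.mp hu).2⟩
  have hcand : ρ ∈ scaleCandidates x y (t + 1) :=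
    mem_insert_of_mem (mem_filter.mpr ⟨hρ, hρr.le.trans (scaleRadius_le x y _),
      hcard.1.trans (hsub x), hcard.2.trans (hsub y)⟩)
  exact (min'_le _ _ hcand).not_gt hρr

end ScaleRadius

section FrechetEmbedding

variable {X : Type*} [MetricSpace X]

lemma sub_le_infDist_sub_infDist {A : Finset X} {z w : X} {r₀ r₁ : ℝ}
    (hmiss : ∀ a ∈ A, r₁ ≤ dist z a) (hhit : ∃ a ∈ A, dist w a ≤ r₀) :
    r₁ - r₀ ≤ infDist z (A : Set X) - infDist w (A : Set X) := by
  obtain ⟨a, ha, hwa⟩ := hhit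
  have hz : r₁ ≤ infDist z (A : Set X) := by
    by_contra! hlt
    obtain ⟨b, hb, hzb⟩ := (infDist_lt_iff ⟨a, ha⟩).mp hlt
    exact (hmiss b hb).not_gt hzb
  have hw := infDist_le_dist_of_mem (x := w) (mem_coe.mpr ha)
  linarith

variable [Fintype X]

lemma hitConst_mul_sq_le_sum_bernoulliWeight {z w : X} {r₀ r₁ p : ℝ} (hr : r₀ ≤ r₁)
    (hsep : r₁ + r₀ ≤ dist z w) (hp0 : 0 ≤ p) (hp : p ≤ 1 / 2)
    (hS : p * #{u | dist z u < r₁} ≤ 1) (hT : 1 / 2 ≤ p * #{u | dist w u ≤ r₀}) :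
    hitConst * (r₁ - r₀) ^ 2 ≤ ∑ A ∈ (univ : Finset X).powerset,
      bernoulliWeight p A * dist (infDist z (A : Set X)) (infDist w (A : Set X)) ^ 2 := by
  set S : Finset X := {u | dist z u < r₁}
  set T : Finset X := {u | dist w u ≤ r₀}
  have hST : Disjoint S T := by
    refine disjoint_left.mpr fun u hzu hwu => ?_
    have := dist_triangle_right z w u
    simp only [S, T, mem_filter, mem_univ, true_and] at hzu hwu
    linarith
  have hgap : ∀ A ∈ ({A ∈ (univ : Finset X).powerset | Disjoint A S ∧ ¬Disjoint A T}),
      (r₁ - r₀) ^ 2 ≤ dist (infDist z (A : Set X)) (infDist w (A : Set X)) ^ 2 := by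
    intro A hA
    obtain ⟨-, hmiss, hhit⟩ := mem_filter.mp hA
    obtain ⟨a, ha, haT⟩ := not_disjoint_iff.mp hhit
    have hgap := sub_le_infDist_sub_infDist (z := z) (w := w)
      (fun b hb => by simpa [S] using disjoint_left.mp hmiss hb) ⟨a, ha, by simpa [T] using haT⟩
    exact pow_le_pow_left₀ (sub_nonneg.mpr hr) (hgap.trans (Real.dist_eq _ _ ▸ le_abs_self _)) 2
  have hp1 : p ≤ 1 := by linarith
  calc hitConst * (r₁ - r₀) ^ 2
      ≤ (∑ A ∈ (univ : Finset X).powerset with Disjoint A S ∧ ¬Disjoint A T,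
          bernoulliWeight p A) * (r₁ - r₀) ^ 2 := by
        gcongr
        exact hitConst_le_sum_bernoulliWeight_hit hp0 hp hST hS hT
    _ ≤ ∑ A ∈ (univ : Finset X).powerset with Disjoint A S ∧ ¬Disjoint A T,
          bernoulliWeight p A * dist (infDist z (A : Set X)) (infDist w (A : Set X)) ^ 2 := by
        rw [sum_mul]
        exact sum_le_sum fun A hA =>
          mul_le_mul_of_nonneg_left (hgap A hA) (bernoulliWeight_nonneg hp0 hp1 A)
    _ ≤ _ := sum_le_sum_of_subset_of_nonneg (filter_subset _ _) fun A _ _ =>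
        mul_nonneg (bernoulliWeight_nonneg hp0 hp1 A) (sq_nonneg _)

lemma hitConst_mul_sq_scaleRadius_sub_le (x y : X) (t : ℕ) :
    hitConst * (scaleRadius x y (t + 1) - scaleRadius x y t) ^ 2 ≤
      ∑ A ∈ (univ : Finset X).powerset, bernoulliWeight ((1 / 2) ^ (t + 1)) A *
        dist (infDist x (A : Set X)) (infDist y (A : Set X)) ^ 2 := by
  set p : ℝ := (1 / 2) ^ (t + 1)
  have hp0 : 0 ≤ p := by positivity
  have hp : p ≤ 1 / 2 := pow_le_of_le_one (by norm_num) (by norm_num) t.succ_ne_zero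
  rcases (scaleRadius_mono x y (Nat.le_add_right t 1)).eq_or_lt with heq | hlt
  · rw [← heq, sub_self, zero_pow two_ne_zero, mul_zero]
    exact sum_nonneg fun A _ =>
      mul_nonneg (bernoulliWeight_nonneg hp0 (by linarith) A) (sq_nonneg _)
  have hsep : scaleRadius x y (t + 1) + scaleRadius x y t ≤ dist x y := by
    linarith [scaleRadius_le x y t, scaleRadius_le x y (t + 1), dist_nonneg (x := x) (y := y)]
  have hS : ∀ z : X, #{u | dist z u < scaleRadius x y (t + 1)} < 2 ^ (t + 1) →
      p * #{u | dist z u < scaleRadius x y (t + 1)} ≤ 1 := fun z hz => by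
    calc p * #{u | dist z u < scaleRadius x y (t + 1)} ≤ p * 2 ^ (t + 1) := by
          gcongr; exact_mod_cast hz.le
      _ = 1 := by rw [← mul_pow]; norm_num
  have hT : ∀ w : X, 2 ^ t ≤ #{u | dist w u ≤ scaleRadius x y t} →
      1 / 2 ≤ p * #{u | dist w u ≤ scaleRadius x y t} := fun w hw => by
    calc (1 / 2 : ℝ) = p * 2 ^ t := by
          rw [show p = (1 / 2) ^ t * (1 / 2) from pow_succ _ _, mul_right_comm, ← mul_pow]
          norm_num
      _ ≤ _ := by gcongr; exact_mod_cast hw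
  have hr := hlt.le
  obtain ⟨hx, hy⟩ := two_pow_le_card_closedBall_scaleRadius hlt
  rcases card_ball_scaleRadius_succ_lt hlt with hball | hball
  · exact hitConst_mul_sq_le_sum_bernoulliWeight hr hsep hp0 hp (hS x hball) (hT y hy)
  · simpa only [dist_comm (infDist y _)] using hitConst_mul_sq_le_sum_bernoulliWeight hr
      (dist_comm x y ▸ hsep) hp0 hp (hS y hball) (hT x hx)

lemma hitConst_div_mul_dist_sq_le {m : ℕ} (hm : Fintype.card X < 2 ^ m) (x y : X) :
    hitConst / (16 * m ^ 2) * dist x y ^ 2 ≤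
      ∑ t ∈ range m, ∑ A ∈ (univ : Finset X).powerset, bernoulliWeight ((1 / 2) ^ (t + 1)) A / m *
        dist (infDist x (A : Set X)) (infDist y (A : Set X)) ^ 2 := by
  have hm0 : (0 : ℝ) < m := by
    have : 0 < Fintype.card X := Fintype.card_pos_iff.mpr ⟨x⟩
    have : m ≠ 0 := by rintro rfl; omega
    positivity
  have htel : ∑ t ∈ range m, (scaleRadius x y (t + 1) - scaleRadius x y t) = dist x y / 4 := by
    rw [sum_range_sub (scaleRadius x y), scaleRadius_of_card_lt x y hm, scaleRadius_zero,
      sub_zero]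
  have hcs := sq_sum_le_card_mul_sum_sq (s := range m)
    (f := fun t => scaleRadius x y (t + 1) - scaleRadius x y t)
  rw [htel, card_range] at hcs
  set S := ∑ t ∈ range m, (scaleRadius x y (t + 1) - scaleRadius x y t) ^ 2 with hS
  calc hitConst / (16 * m ^ 2) * dist x y ^ 2 = hitConst * (dist x y / 4) ^ 2 / m / m := by
        field_simp; ring
    _ ≤ hitConst * (m * S) / m / m := by gcongr; exact hitConst_pos.le
    _ = (∑ t ∈ range m, hitConst * (scaleRadius x y (t + 1) - scaleRadius x y t) ^ 2) / m := by
        rw [hS, ← mul_sum]; field_simp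
    _ ≤ (∑ t ∈ range m, ∑ A ∈ (univ : Finset X).powerset, bernoulliWeight ((1 / 2) ^ (t + 1)) A *
          dist (infDist x (A : Set X)) (infDist y (A : Set X)) ^ 2) / m := by
        gcongr with t
        exact hitConst_mul_sq_scaleRadius_sub_le x y t
    _ = _ := by
        simp only [sum_div]
        exact sum_congr rfl fun t _ => sum_congr rfl fun A _ => by ring

end FrechetEmbedding

theorem hitConst_div_mul_lam_real_le_lam {V X : Type*} [Fintype V] [MetricSpace X] [Fintype X]
    [Nontrivial X] {G : SimpleGraph V} (hG : G.Connected) (hV : 2 ≤ Fintype.card V) {m : ℕ}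
    (hm : Fintype.card X < 2 ^ m) :
    hitConst / (16 * m ^ 2) * lam G (fun a b : ℝ => dist a b) ≤
      lam G (fun x y : X => dist x y) := by
  have hm0 : (m : ℝ) ≠ 0 := by
    have : 0 < Fintype.card X := Fintype.card_pos
    have : m ≠ 0 := by rintro rfl; omega
    exact_mod_cast this
  have hw : ∀ q ∈ range m ×ˢ (univ : Finset X).powerset,
      0 ≤ bernoulliWeight ((1 / 2 : ℝ) ^ (q.1 + 1)) q.2 / m := fun q _ =>
    div_nonneg (bernoulliWeight_nonneg (by positivity) (pow_le_one₀ (by norm_num) (by norm_num))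
      _) (Nat.cast_nonneg m)
  refine mul_lam_le_lam_of_average hG hV (s := range m ×ˢ (univ : Finset X).powerset)
    (w := fun q => bernoulliWeight ((1 / 2 : ℝ) ^ (q.1 + 1)) q.2 / m)
    (φ := fun q x => infDist x (q.2 : Set X)) hw ?_
    (fun _ _ => lipschitz_infDist_pt _) fun x y => ?_
  · rw [sum_product]
    simp only [← sum_div, sum_bernoulliWeight, sum_const, card_range, nsmul_eq_mul, mul_one,
      div_self hm0, le_refl]
  · simpa only [sum_product] using hitConst_div_mul_dist_sq_le hm x y

lemma natLog_two_succ_mul_log_two_le {n : ℕ} (hn : 2 ≤ n) :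
    ((Nat.log 2 n + 1 : ℕ) : ℝ) * Real.log 2 ≤ 2 * Real.log n := by
  have hk : 1 ≤ Nat.log 2 n := Nat.log_pos one_lt_two hn
  have hpow : ((2 ^ Nat.log 2 n : ℕ) : ℝ) ≤ n := by exact_mod_cast Nat.pow_log_le_self 2 (by omega)
  have hlog := Real.log_le_log (by positivity) hpow
  push_cast at hlog ⊢
  rw [Real.log_pow] at hlog
  have : (1 : ℝ) ≤ Nat.log 2 n := by exact_mod_cast hk
  nlinarith [Real.log_pos one_lt_two]

/-- There is an absolute constant `C > 0` such that for every finite metric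
space `X` with at least two points and every connected finite simple graph `G` with at
least two vertices, `(C / (log |X|)²) · λ(G, ℝ) ≤ λ(G, X)`. -/
theorem stmt_6 : ∃ C : ℝ, 0 < C ∧
    ∀ (X : Type*) [MetricSpace X] [Fintype X], 2 ≤ Fintype.card X →
      ∀ (V : Type*) [Fintype V] (G : SimpleGraph V), G.Connected → 2 ≤ Fintype.card V →
        C / (Real.log (Fintype.card X)) ^ 2 * lam G (fun x y : ℝ => dist x y)
          ≤ lam G (fun x y : X => dist x y) := by
  refine ⟨hitConst * Real.log 2 ^ 2 / 64, by have := hitConst_pos; positivity, ?_⟩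
  intro X _ _ hX V _ G hG hV
  have : Nontrivial X := Fintype.one_lt_card_iff_nontrivial.mp hX
  set n := Fintype.card X
  set m := Nat.log 2 n + 1
  have hlogn : 0 < Real.log n := Real.log_pos (by exact_mod_cast hX)
  have hconst : hitConst * Real.log 2 ^ 2 / 64 / Real.log n ^ 2 ≤ hitConst / (16 * m ^ 2) := by
    have hm := natLog_two_succ_mul_log_two_le hX
    rw [div_div, div_le_div_iff₀ (by positivity) (by positivity)]
    have := hitConst_pos
    have hsq : ((m : ℝ) * Real.log 2) ^ 2 ≤ (2 * Real.log n) ^ 2 :=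
      pow_le_pow_left₀ (by positivity) hm 2
    nlinarith
  calc hitConst * Real.log 2 ^ 2 / 64 / Real.log n ^ 2 * lam G (fun x y : ℝ => dist x y)
      ≤ hitConst / (16 * m ^ 2) * lam G (fun x y : ℝ => dist x y) :=
        mul_le_mul_of_nonneg_right hconst lam_dist_nonneg
    _ ≤ lam G (fun x y : X => dist x y) :=
        hitConst_div_mul_lam_real_le_lam hG hV (Nat.lt_pow_succ_log_self one_lt_two n)
end

section
/- Let G be a connected finite simple graph on n ≥ 2 vertices and let H be a connected finite simple graph on k ≥ 2 vertices with diameter D_H. Then λ(G, H) ≥ 2k / (D_H² · vol(G) · (k−1)). -/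
/-!
Fix a nonconstant `f`. Connectivity of `G` yields an edge `ab` with `f a ≠ f b`, so the edge sum of
`R_f` is at least `1` and its pair sum is positive. Each pair term is at most `D_H²` times the
product of the degrees, and only pairs in different fibres of `f` contribute. Grouping the degree
products by fibre masses `M_c`, the cross terms sum to `(∑ M_c)² - ∑ M_c² ≤ vol(G)² (k - 1) / k`
by Cauchy–Schwarz over the `k` fibres.
-/

open scoped Classical
open Finset

section DoubleSum

variable {ι M : Type*} [Fintype ι] [AddCommMonoid M] [Preorder M] [AddLeftMono M]

theorem single_le_sum_sum {F : ι → ι → M} (hF : ∀ i j, 0 ≤ F i j) (a b : ι) :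
    F a b ≤ ∑ i, ∑ j, F i j := by
  rw [← sum_product', univ_product_univ]
  exact single_le_sum (fun p _ => hF p.1 p.2) (mem_univ (a, b))

theorem add_le_sum_sum {F : ι → ι → M} (hF : ∀ i j, 0 ≤ F i j) {a b : ι} (hab : a ≠ b) :
    F a b + F b a ≤ ∑ i, ∑ j, F i j := by
  rw [← sum_product', univ_product_univ]
  exact add_le_sum (f := fun p : ι × ι => F p.1 p.2) (fun p _ => hF p.1 p.2) (mem_univ (a, b))
    (mem_univ (b, a)) (by simp [hab])

end DoubleSum

section Fibres

variable {V W : Type*} [Fintype V] [Fintype W]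

theorem sum_sum_ite_apply_eq (f : V → W) (w : V → ℝ) :
    ∑ u, ∑ v, (if f u = f v then w u * w v else 0) = ∑ c, (∑ u with f u = c, w u) ^ 2 := by
  simp only [sq, sum_mul_sum, sum_filter, ite_mul, mul_ite, mul_zero, zero_mul]
  symm
  rw [sum_comm]
  refine sum_congr rfl fun u _ => ?_
  rw [sum_comm]
  refine sum_congr rfl fun v _ => ?_
  simp

theorem card_mul_sum_sum_ite_apply_ne_le (f : V → W) (w : V → ℝ) :
    (Fintype.card W : ℝ) * ∑ u, ∑ v, (if f u ≠ f v then w u * w v else 0)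
      ≤ (∑ u, w u) ^ 2 * ((Fintype.card W : ℝ) - 1) := by
  have hsplit : ∑ u, ∑ v, (if f u ≠ f v then w u * w v else 0)
      = (∑ u, w u) ^ 2 - ∑ u, ∑ v, (if f u = f v then w u * w v else 0) := by
    simp only [sq, sum_mul_sum, ← sum_sub_distrib]
    refine sum_congr rfl fun u _ => sum_congr rfl fun v _ => ?_
    by_cases h : f u = f v <;> simp [h]
  have hCS : (∑ u, w u) ^ 2 ≤ Fintype.card W * ∑ c, (∑ u with f u = c, w u) ^ 2 := by
    rw [← sum_fiberwise univ f w]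
    simpa using sq_sum_le_card_mul_sum_sq (s := univ) (f := fun c => ∑ u with f u = c, w u)
  rw [hsplit, sum_sum_ite_apply_eq]
  linarith

end Fibres

theorem SimpleGraph.Preconnected.exists_adj_apply_ne {V X : Type*} {G : SimpleGraph V}
    (hG : G.Preconnected) {f : V → X} {u v : V} (h : f u ≠ f v) : ∃ a b, G.Adj a b ∧ f a ≠ f b := by
  obtain ⟨d, -, hd₁, hd₂⟩ := (hG u v).some.exists_boundary_dart {x | f x = f u} rfl h.symm
  exact ⟨_, _, d.adj, fun h' => hd₂ (h'.symm.trans hd₁)⟩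

section Graphs

variable {V W : Type*} [Fintype V] [Fintype W] {G : SimpleGraph V} {H : SimpleGraph W}

theorem gdeg_pos_of_adj {u v : V} (h : G.Adj u v) : 0 < gdeg G u :=
  (Set.ncard_pos (Set.toFinite _)).mpr ⟨v, h⟩

theorem gvol_pos_of_adj {u v : V} (h : G.Adj u v) : 0 < gvol G :=
  (gdeg_pos_of_adj h).trans_le (single_le_sum (fun _ _ => Nat.zero_le _) (mem_univ u))

theorem dist_le_gDiam_s7 (i j : W) : H.dist i j ≤ gDiam H :=
  le_sup (f := fun p : W × W => H.dist p.1 p.2) (mem_univ (i, j))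

theorem card_mul_sum_sum_dist_sq_mul_le (f : V → W) :
    (Fintype.card W : ℝ) * ∑ u, ∑ v,
        (if u ≠ v then (H.dist (f u) (f v) : ℝ) ^ 2 * (gdeg G u : ℝ) * (gdeg G v : ℝ) else 0)
      ≤ (gDiam H : ℝ) ^ 2 * (gvol G : ℝ) ^ 2 * ((Fintype.card W : ℝ) - 1) := by
  have hT := card_mul_sum_sum_ite_apply_ne_le f (fun u => (gdeg G u : ℝ))
  rw [← Nat.cast_sum] at hT
  calc _ ≤ (Fintype.card W : ℝ) * ((gDiam H : ℝ) ^ 2 *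
          ∑ u, ∑ v, (if f u ≠ f v then (gdeg G u : ℝ) * (gdeg G v : ℝ) else 0)) := by
        gcongr
        rw [mul_sum]
        refine sum_le_sum fun u _ => ?_
        rw [mul_sum]
        refine sum_le_sum fun v _ => ?_
        by_cases hfuv : f u = f v
        · simp [hfuv]
        · rw [if_pos (ne_of_apply_ne f hfuv), if_pos hfuv, mul_assoc]
          gcongr
          exact_mod_cast dist_le_gDiam_s7 (f u) (f v)
    _ ≤ (gDiam H : ℝ) ^ 2 * ((gvol G : ℝ) ^ 2 * ((Fintype.card W : ℝ) - 1)) := by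
        rw [mul_left_comm]
        exact mul_le_mul_of_nonneg_left hT (sq_nonneg _)
    _ = _ := by ring

theorem le_Rf (hG : G.Preconnected) (hH : H.Connected) {f : V → W} (hf : ∃ u v, f u ≠ f v) :
    2 * (Fintype.card W : ℝ) / ((gDiam H : ℝ) ^ 2 * (gvol G : ℝ) * ((Fintype.card W : ℝ) - 1))
      ≤ Rf G (fun i j => (H.dist i j : ℝ)) f := by
  obtain ⟨u₀, v₀, hf₀⟩ := hf
  obtain ⟨a, b, hab, hfab⟩ := hG.exists_adj_apply_ne hf₀
  have hd : ∀ {u v}, f u ≠ f v → (1 : ℝ) ≤ H.dist (f u) (f v) := fun h => by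
    exact_mod_cast hH.pos_dist_of_ne h
  have hdeg : ∀ {u v}, G.Adj u v → (0 : ℝ) < gdeg G u := fun h => by
    exact_mod_cast gdeg_pos_of_adj h
  have hvol : (0 : ℝ) < gvol G := by exact_mod_cast gvol_pos_of_adj hab
  have hk : (1 : ℝ) < Fintype.card W := by exact_mod_cast Fintype.one_lt_card_iff.mpr ⟨_, _, hfab⟩
  have hD : (1 : ℝ) ≤ gDiam H := (hd hfab).trans (by exact_mod_cast dist_le_gDiam_s7 (f a) (f b))
  have hkey := card_mul_sum_sum_dist_sq_mul_le (G := G) (H := H) f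
  set SE := ∑ u, ∑ v, if G.Adj u v then (H.dist (f u) (f v) : ℝ) ^ 2 else 0
  set SP := ∑ u, ∑ v,
    if u ≠ v then (H.dist (f u) (f v) : ℝ) ^ 2 * (gdeg G u : ℝ) * (gdeg G v : ℝ) else 0
  have hSE : 2 ≤ SE := by
    refine le_trans ?_ (add_le_sum_sum (fun u v => by split_ifs <;> positivity) hab.ne)
    rw [if_pos hab, if_pos hab.symm]
    nlinarith [hd hfab, hd hfab.symm]
  have hSP : 0 < SP := by
    refine lt_of_lt_of_le ?_ (single_le_sum_sum (fun u v => by split_ifs <;> positivity) a b)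
    rw [if_pos hab.ne]
    have := hd hfab
    have := hdeg hab
    have := hdeg hab.symm
    positivity
  change _ ≤ gvol G * (SE / 2) / (SP / 2)
  clear_value SE SP
  have hden : (0 : ℝ) < (gDiam H : ℝ) ^ 2 * gvol G * (Fintype.card W - 1) :=
    mul_pos (by positivity) (by linarith)
  rw [div_le_div_iff₀ hden (by positivity)]
  nlinarith [mul_le_mul_of_nonneg_left hSE hden.le]

end Graphs

/-- For a connected finite simple graph `G` on `n ≥ 2` vertices and a connected
finite simple graph `H` on `k ≥ 2` vertices with diameter `D_H`,
`λ(G, H) ≥ 2k / (D_H² · vol(G) · (k - 1))`. -/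
theorem stmt_7 {V W : Type*} [Fintype V] [Fintype W]
    (G : SimpleGraph V) (H : SimpleGraph W)
    (hG : G.Connected) (hH : H.Connected)
    (hn : 2 ≤ Fintype.card V) (hk : 2 ≤ Fintype.card W) :
    2 * (Fintype.card W : ℝ) /
        ((gDiam H : ℝ) ^ 2 * (gvol G : ℝ) * ((Fintype.card W : ℝ) - 1))
      ≤ lam G (fun i j => (H.dist i j : ℝ)) := by
  apply le_csInf
  · obtain ⟨u, v, huv⟩ := Fintype.one_lt_card_iff.mp hn
    obtain ⟨a, b, hab⟩ := Fintype.one_lt_card_iff.mp hk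
    exact ⟨_, fun x => if x = u then a else b, ⟨u, v, by simp [huv.symm, hab]⟩, rfl⟩
  · rintro r ⟨f, hf, rfl⟩
    exact le_Rf hG.preconnected hH hf
end

section
/- For all integers n ≥ 2 and j ≥ 2, λ(K_{n,j}, K₂) = 1, where K_{n,j} is the complete j-partite graph in which each of the j parts has exactly n vertices (two vertices are adjacent if and only if they lie in different parts), and K₂ is the complete graph on two vertices. -/
open scoped Classical
open Finset

/-- The complete `j`-partite graph in which each of the `j` parts has exactly `n` vertices:
the vertex `(p, x)` lies in part `p`, and two vertices are adjacent iff they lie in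
different parts. -/
def Knj (n j : ℕ) : SimpleGraph (Fin j × Fin n) where
  Adj p q := p.1 ≠ q.1
  symm := ⟨fun _ _ h => Ne.symm h⟩
  loopless := ⟨fun _ h => h rfl⟩

/-!
On a `k`-regular graph, `R_f = |V| · Σ_{edges} d² / (k · Σ_{pairs} d²)`. Map `K₂` isometrically to
`{0, 1} ⊆ ℝ` and write `g` for the resulting real function on `Fin j × Fin n`. The total pairwise
square deviation `P` of `g` splits as `j · W + B`, where `W` collects the pairs inside a part and
`B = Σ_{p,q} (t_p - t_q)²` compares the part sums `t_p`. The edges of `K_{n,j}` are exactly the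
pairs in different parts, so `R_f = j (P - W) / ((j - 1) P) = 1 + B / ((j - 1) P) ≥ 1`, with
equality for any cut meeting all parts in equally many vertices.
-/
lemma sum_sum_sub_sq {ι : Type*} [Fintype ι] (g : ι → ℝ) :
    ∑ u, ∑ v, (g u - g v) ^ 2 = 2 * (Fintype.card ι * ∑ u, g u ^ 2 - (∑ u, g u) ^ 2) := by
  simp only [sub_sq, Finset.sum_add_distrib, Finset.sum_sub_distrib, Finset.sum_const,
    Finset.card_univ, nsmul_eq_mul, mul_assoc, ← Finset.mul_sum, ← Finset.sum_mul]
  ring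

lemma sum_sum_sub_sq_prod {ι κ : Type*} [Fintype ι] [Fintype κ] (g : ι × κ → ℝ) :
    ∑ u, ∑ v, (g u - g v) ^ 2 =
      Fintype.card ι * ∑ p, ∑ x, ∑ y, (g (p, x) - g (p, y)) ^ 2 +
        ∑ p, ∑ q, (∑ x, g (p, x) - ∑ x, g (q, x)) ^ 2 := by
  simp only [sum_sum_sub_sq, ← Finset.mul_sum, Finset.sum_sub_distrib, Fintype.card_prod]
  rw [Fintype.sum_prod_type, Fintype.sum_prod_type]
  push_cast
  ring

lemma Rf_of_forall_gdeg_eq {V X : Type*} [Fintype V] (G : SimpleGraph V) (d : X → X → ℝ)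
    (f : V → X) (hd : ∀ v, d (f v) (f v) = 0) {k : ℕ} (hk : ∀ v, gdeg G v = k) :
    Rf G d f = Fintype.card V * (∑ u, ∑ v, if G.Adj u v then d (f u) (f v) ^ 2 else 0) /
      (k * ∑ u, ∑ v, d (f u) (f v) ^ 2) := by
  have hvol : (gvol G : ℝ) = Fintype.card V * k := by simp [gvol, hk]
  have hden : (∑ u, ∑ v, if u ≠ v then d (f u) (f v) ^ 2 * (gdeg G u : ℝ) * gdeg G v else 0) =
      k ^ 2 * ∑ u, ∑ v, d (f u) (f v) ^ 2 := by
    simp only [hk, Finset.mul_sum]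
    refine Finset.sum_congr rfl fun u _ => Finset.sum_congr rfl fun v _ => ?_
    split_ifs with huv
    · ring
    · simp [not_not.mp huv, hd]
  rw [Rf, hvol, hden]
  rcases eq_or_ne (k : ℝ) 0 with hk0 | hk0
  · simp [hk0]
  · field_simp

lemma gdeg_knj (n j : ℕ) (v : Fin j × Fin n) : gdeg (Knj n j) v = (j - 1) * n := by
  have hnbr : (Knj n j).neighborSet v =
      ((univ.erase v.1 ×ˢ univ : Finset (Fin j × Fin n)) : Set _) := by
    ext q
    simp [Knj, ne_comm]
  rw [gdeg, hnbr, Set.ncard_coe_finset, card_product, card_erase_of_mem (mem_univ _)]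
  simp

lemma sum_sum_ite_knj_adj (n j : ℕ) (h : Fin j × Fin n → Fin j × Fin n → ℝ) :
    (∑ u, ∑ v, if (Knj n j).Adj u v then h u v else 0) =
      ∑ u, ∑ v, h u v - ∑ p, ∑ x, ∑ y, h (p, x) (p, y) := by
  have hsplit : ∀ u v, (if (Knj n j).Adj u v then h u v else 0) =
      h u v - if u.1 = v.1 then h u v else 0 := by
    intro u v
    by_cases huv : u.1 = v.1 <;> simp [Knj, huv]
  simp only [hsplit, Finset.sum_sub_distrib]
  congr 1
  rw [Fintype.sum_prod_type]
  refine Finset.sum_congr rfl fun p _ => Finset.sum_congr rfl fun x _ => ?_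
  rw [Fintype.sum_prod_type, Finset.sum_comm]
  simp

lemma dist_top_fin_two_sq (a b : Fin 2) :
    ((⊤ : SimpleGraph (Fin 2)).dist a b : ℝ) ^ 2 = ((a : ℕ) - (b : ℕ) : ℝ) ^ 2 := by
  fin_cases a <;> fin_cases b <;> simp [SimpleGraph.dist_eq_one_iff_adj]

lemma Rf_knj_eq_one_add {n j : ℕ} {X : Type*} (d : X → X → ℝ) (f : Fin j × Fin n → X)
    (g : Fin j × Fin n → ℝ) (hd : ∀ u v, d (f u) (f v) ^ 2 = (g u - g v) ^ 2)
    (hn : n ≠ 0) (hj : 2 ≤ j) (hg : ∃ u v, g u ≠ g v) :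
    Rf (Knj n j) d f = 1 + (∑ p, ∑ q, (∑ x, g (p, x) - ∑ x, g (q, x)) ^ 2) /
      (((j : ℝ) - 1) * ∑ u, ∑ v, (g u - g v) ^ 2) := by
  set P := ∑ u, ∑ v, (g u - g v) ^ 2
  set W := ∑ p, ∑ x, ∑ y, (g (p, x) - g (p, y)) ^ 2
  set B := ∑ p, ∑ q, (∑ x, g (p, x) - ∑ x, g (q, x)) ^ 2
  have hPWB : P = j * W + B := by simpa using sum_sum_sub_sq_prod g
  have hP : 0 < P := by
    obtain ⟨u₀, v₀, hne⟩ := hg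
    exact Finset.sum_pos' (fun u _ => Finset.sum_nonneg fun v _ => sq_nonneg _)
      ⟨u₀, mem_univ _, Finset.sum_pos' (fun v _ => sq_nonneg _)
        ⟨v₀, mem_univ _, by have := sub_ne_zero.mpr hne; positivity⟩⟩
  have hnum : (∑ u, ∑ v, if (Knj n j).Adj u v then d (f u) (f v) ^ 2 else 0) = P - W := by
    rw [sum_sum_ite_knj_adj]
    simp only [hd]
    rfl
  have hdiag : ∀ v, d (f v) (f v) = 0 := fun v => by simpa using hd v v
  have hden : (∑ u, ∑ v, d (f u) (f v) ^ 2) = P := by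
    simp only [hd]
    rfl
  rw [Rf_of_forall_gdeg_eq _ _ _ hdiag (gdeg_knj n j), hnum, hden]
  have hj1 : (j : ℝ) - 1 ≠ 0 := by
    have : (2 : ℝ) ≤ j := by exact_mod_cast hj
    linarith
  have hn' : (n : ℝ) ≠ 0 := by exact_mod_cast hn
  rw [Fintype.card_prod, Fintype.card_fin, Fintype.card_fin,
    Nat.cast_mul, Nat.cast_mul, Nat.cast_sub (by omega), Nat.cast_one]
  field_simp
  linear_combination hPWB

/-- For all integers `n ≥ 2` and `j ≥ 2`, `λ(K_{n,j}, K₂) = 1`, where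
`K_{n,j}` is the complete `j`-partite graph with all parts of size `n`. -/
theorem stmt_16 (n j : ℕ) (hn : 2 ≤ n) (hj : 2 ≤ j) :
    lam (Knj n j) (fun a b : Fin 2 => ((⊤ : SimpleGraph (Fin 2)).dist a b : ℝ)) = 1 := by
  have hRf (f : Fin j × Fin n → Fin 2) (hf : ∃ u v, f u ≠ f v) :=
    Rf_knj_eq_one_add (fun a b : Fin 2 => ((⊤ : SimpleGraph (Fin 2)).dist a b : ℝ)) f
      (fun v => ((f v : ℕ) : ℝ)) (fun u v => dist_top_fin_two_sq (f u) (f v)) (by omega) hj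
      (by obtain ⟨u, v, huv⟩ := hf; exact ⟨u, v, by exact_mod_cast Fin.val_injective.ne huv⟩)
  refine IsLeast.csInf_eq ⟨?_, ?_⟩
  · -- the part sums of this cut all equal `n - 1`, so the between-part term vanishes
    let f₀ : Fin j × Fin n → Fin 2 := fun v => if (v.2 : ℕ) = 0 then 0 else 1
    have hf₀ : ∃ u v, f₀ u ≠ f₀ v :=
      ⟨(⟨0, by omega⟩, ⟨0, by omega⟩), (⟨0, by omega⟩, ⟨1, by omega⟩), by simp [f₀]⟩
    refine ⟨f₀, hf₀, ?_⟩
    rw [hRf f₀ hf₀]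
    simp [f₀]
  · rintro r ⟨f, hf, rfl⟩
    rw [hRf f hf]
    have hj1 : (0 : ℝ) ≤ j - 1 := by
      have : (2 : ℝ) ≤ j := by exact_mod_cast hj
      linarith
    refine le_add_of_nonneg_right (div_nonneg ?_ (mul_nonneg hj1 ?_)) <;> positivity
end
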